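/- arXiv:1603.05810 — 2 statements merged into one kernel-verified Lean document; each statement's English description precedes it below -/
import Mathlib

section
/- π²/32 − (log 2)²/8 = 2·Re Li₂((1/2)e^{iπ/2}) + 2·Re Li₂((1/(2√2))e^{iπ/4}) − Re Li₂((1/(4√2))e^{iπ/4}). -/
noncomputable def Li (s : ℕ) (z : ℂ) : ℂ := ∑' k : ℕ, z ^ (k + 1) / ((k : ℂ) + 1) ^ s

noncomputable def LiR (s : ℕ) (x : ℝ) : ℝ := ∑' k : ℕ, x ^ (k + 1) / ((k : ℝ) + 1) ^ s

/-!
Landen's identity `Li₂ z + Li₂ (z / (z - 1)) = -log² (1 - z) / 2`, proved by differentiating, sends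
`i/2`, `(1 + i)/4`, `(1 + i)/8` to `v`, `conj (-v)`, `v²` with `v = (1 - 2i)/5`. Taking real parts,
the duplication formula `Li₂ (v²) = 2 Li₂ v + 2 Li₂ (-v)` cancels every dilogarithm, leaving the real
parts of `log² (1 - z)`. These involve `log (5/4)`, `log (5/8)`, `log (25/32)` and `arctan (1/2)`,
`arctan (1/3)`, `arctan (1/7)`, which collapse by `25/32 = 5/4 · 5/8` and two Machin-type relations.
-/

open Complex ComplexConjugate
open scoped Real

noncomputable def LiDeriv (s : ℕ) (z : ℂ) : ℂ := ∑' k : ℕ, z ^ k / ((k : ℂ) + 1) ^ s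

section Polylog

variable {z : ℂ}

lemma norm_div_natCast_add_one_pow_le (w : ℂ) (k s : ℕ) : ‖w / ((k : ℂ) + 1) ^ s‖ ≤ ‖w‖ := by
  rw [norm_div, norm_pow, ← Nat.cast_add_one, norm_natCast]
  exact div_le_self (norm_nonneg w) (one_le_pow₀ (by simp))

lemma summable_LiDeriv_series (s : ℕ) (hz : ‖z‖ < 1) :
    Summable fun k : ℕ => z ^ k / ((k : ℂ) + 1) ^ s :=
  .of_norm_bounded (summable_geometric_of_lt_one (norm_nonneg z) hz) fun k =>
    (norm_div_natCast_add_one_pow_le _ k s).trans (norm_pow z k).le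

lemma hasSum_Li (s : ℕ) (hz : ‖z‖ < 1) :
    HasSum (fun k : ℕ => z ^ (k + 1) / ((k : ℂ) + 1) ^ s) (Li s z) := by
  refine Summable.hasSum ?_
  simpa only [pow_succ, mul_div_right_comm] using (summable_LiDeriv_series s hz).mul_right z

lemma Li_zero_right (s : ℕ) : Li s 0 = 0 := by simp [Li]

lemma LiDeriv_zero_right (s : ℕ) : LiDeriv s 0 = 1 := by
  rw [LiDeriv, tsum_eq_single 0 fun k hk => by simp [hk]]
  simp

lemma mul_LiDeriv (s : ℕ) (z : ℂ) : z * LiDeriv s z = Li s z := by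
  rw [LiDeriv, ← tsum_mul_left, Li]
  simp only [pow_succ', mul_div_assoc]

lemma Li_conj (s : ℕ) (z : ℂ) : Li s (conj z) = conj (Li s z) := by
  simp only [Li, starRingEnd_apply, tsum_star, star_div₀, star_pow, star_add, star_one, star_natCast]

lemma Li_one (hz : ‖z‖ < 1) : Li 1 z = -log (1 - z) := by
  have h := (hasSum_nat_add_iff' 1).mpr (hasSum_taylorSeries_neg_log hz)
  simp only [Finset.sum_range_one, pow_zero, CharP.cast_eq_zero, div_zero, sub_zero,
    Nat.cast_add_one] at h
  simpa [Li] using h.tsum_eq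

lemma LiDeriv_one (hz0 : z ≠ 0) (hz : ‖z‖ < 1) : LiDeriv 1 z = -log (1 - z) / z :=
  eq_div_of_mul_eq hz0 (by rw [mul_comm, mul_LiDeriv, Li_one hz])

lemma hasDerivAt_Li_succ (s : ℕ) (hz : ‖z‖ < 1) : HasDerivAt (Li (s + 1)) (LiDeriv s z) z := by
  obtain ⟨r, hzr, hr⟩ := exists_between hz
  have hr0 : 0 < r := (norm_nonneg z).trans_lt hzr
  refine hasDerivAt_tsum_of_isPreconnected (summable_geometric_of_lt_one hr0.le hr)
    Metric.isOpen_ball (convex_ball (0 : ℂ) r).isPreconnected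
    (g := fun (k : ℕ) (y : ℂ) => y ^ (k + 1) / ((k : ℂ) + 1) ^ (s + 1))
    (g' := fun (k : ℕ) (y : ℂ) => y ^ k / ((k : ℂ) + 1) ^ s)
    (fun k y _ => ?_) (fun k y hy => ?_) (Metric.mem_ball_self hr0)
    (hasSum_Li _ (by simp)).summable (mem_ball_zero_iff.mpr hzr)
  · have hk : (k : ℂ) + 1 ≠ 0 := Nat.cast_add_one_ne_zero k
    refine ((hasDerivAt_pow (k + 1) y).div_const (((k : ℂ) + 1) ^ (s + 1))).congr_deriv ?_
    rw [Nat.add_sub_cancel, pow_succ, Nat.cast_add_one]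
    field_simp
  · exact (norm_div_natCast_add_one_pow_le _ k s).trans
      ((norm_pow y k).trans_le (pow_le_pow_left₀ (norm_nonneg y) (mem_ball_zero_iff.mp hy).le k))

/-- Only the even powers survive in `Li s z + Li s (-z)`. -/
lemma two_mul_Li_sq (s : ℕ) (hz : ‖z‖ < 1) :
    2 * Li s (z ^ 2) = 2 ^ s * (Li s z + Li s (-z)) := by
  have hz' : ‖-z‖ < 1 := by rwa [norm_neg]
  have hz2 : ‖z ^ 2‖ < 1 := by rw [norm_pow]; exact pow_lt_one₀ (norm_nonneg z) hz two_ne_zero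
  have h := ((hasSum_Li s hz).add (hasSum_Li s hz')).mul_left (2 ^ s)
  refine (h.unique ?_).symm
  rw [← zero_add (2 * Li s (z ^ 2))]
  refine HasSum.even_add_odd ?_ ?_
  · convert hasSum_zero with m
    rw [(Even.add_one (even_two_mul m)).neg_pow]
    ring
  · convert (hasSum_Li s hz2).mul_left 2 using 2 with m
    have hm : ((2 * m + 1 : ℕ) : ℂ) + 1 = 2 * ((m : ℂ) + 1) := by push_cast; ring
    rw [(show Even (2 * m + 1 + 1) from ⟨m + 1, by ring⟩).neg_pow, hm, mul_pow, ← pow_mul]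
    field_simp
    ring

end Polylog

section Landen

variable {z : ℂ}

lemma one_sub_mem_slitPlane (hz : ‖z‖ < 1) : 1 - z ∈ slitPlane := by
  simpa [sub_eq_add_neg] using mem_slitPlane_of_norm_lt_one (z := -z) (by rwa [norm_neg])

lemma sub_one_ne_zero_of_re_lt_one (hre : z.re < 1) : z - 1 ≠ 0 := fun h => by
  simp [sub_eq_zero.mp h] at hre

lemma norm_div_sub_one_lt_one (hre : z.re < 1 / 2) : ‖z / (z - 1)‖ < 1 := by
  have hne := sub_one_ne_zero_of_re_lt_one (hre.trans (by norm_num))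
  rw [norm_div, div_lt_one (norm_pos_iff.mpr hne), ← sq_lt_sq₀ (norm_nonneg _) (norm_nonneg _),
    Complex.sq_norm, Complex.sq_norm, normSq_apply, normSq_apply]
  simp only [sub_re, one_re, sub_im, one_im, sub_zero]
  nlinarith

lemma hasDerivAt_Li_two_add_Li_two_div_sub_one_add_log_sq (hz : ‖z‖ < 1) (hre : z.re < 1 / 2) :
    HasDerivAt (fun y => Li 2 y + Li 2 (y / (y - 1)) + log (1 - y) ^ 2 / 2) 0 z := by
  have hne := sub_one_ne_zero_of_re_lt_one (hre.trans (by norm_num))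
  have hw := norm_div_sub_one_lt_one hre
  have hslit := one_sub_mem_slitPlane hz
  have hquot : HasDerivAt (fun y => y / (y - 1)) (-1 / (z - 1) ^ 2) z := by
    refine ((hasDerivAt_id z).div ((hasDerivAt_id z).sub_const 1) hne).congr_deriv ?_
    simp only [id]
    ring
  have hlog : HasDerivAt (fun y => log (1 - y)) (-(1 - z)⁻¹) z := by
    refine ((hasDerivAt_log hslit).comp z ((hasDerivAt_id z).const_sub 1)).congr_deriv ?_
    ring
  refine ((((hasDerivAt_Li_succ 1 hz).add ((hasDerivAt_Li_succ 1 hw).comp z hquot)).add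
    ((hlog.pow 2).div_const 2))).congr_deriv ?_
  rcases eq_or_ne z 0 with rfl | hz0
  · simp [LiDeriv_zero_right]
  have h1z : 1 - z ≠ 0 := slitPlane_ne_zero hslit
  have hlog_inv : log (1 - z / (z - 1)) = -log (1 - z) := by
    rw [← log_inv _ (slitPlane_arg_ne_pi hslit)]
    congr 1
    field_simp
    ring
  rw [LiDeriv_one hz0 hz, LiDeriv_one (div_ne_zero hz0 hne) hw, hlog_inv]
  field_simp
  ring

theorem Li_two_add_Li_two_div_sub_one (hz : ‖z‖ < 1) (hre : z.re < 1 / 2) :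
    Li 2 z + Li 2 (z / (z - 1)) = -log (1 - z) ^ 2 / 2 := by
  set S : Set ℂ := Metric.ball 0 1 ∩ {y | y.re < 1 / 2}
  have hS : IsOpen S := Metric.isOpen_ball.inter (isOpen_lt continuous_re continuous_const)
  have hderiv (y : ℂ) (hy : y ∈ S) :=
    hasDerivAt_Li_two_add_Li_two_div_sub_one_add_log_sq (mem_ball_zero_iff.mp hy.1) hy.2
  have hconst := hS.is_const_of_deriv_eq_zero
    ((convex_ball 0 1).inter (convex_halfSpace_re_lt _)).isPreconnected
    (fun y hy => (hderiv y hy).differentiableAt.differentiableWithinAt)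
    (fun y hy => (hderiv y hy).deriv) (x := 0) (y := z) ⟨by simp, by norm_num⟩
    ⟨mem_ball_zero_iff.mpr hz, hre⟩
  simp only [Li_zero_right, zero_div, sub_zero, log_one] at hconst
  linear_combination -hconst

end Landen

lemma norm_lt_one_of_normSq_lt_one {z : ℂ} (h : normSq z < 1) : ‖z‖ < 1 := by
  rwa [← sq_lt_one_iff₀ (norm_nonneg z), Complex.sq_norm]

lemma arg_eq_arctan_of_re_pos {z : ℂ} (hz : 0 < z.re) : arg z = Real.arctan (z.im / z.re) := by
  have h := abs_lt.mp (abs_arg_lt_pi_div_two_iff.mpr (Or.inl hz))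
  rw [← tan_arg, Real.arctan_tan h.1 h.2]

lemma re_log_sq_of_re_pos {z : ℂ} (hz : 0 < z.re) :
    (log z ^ 2).re = Real.log (normSq z) ^ 2 / 4 - Real.arctan (z.im / z.re) ^ 2 := by
  rw [sq, mul_re, log_re, log_im, arg_eq_arctan_of_re_pos hz, norm_def,
    Real.log_sqrt (normSq_nonneg z)]
  ring

lemma ofReal_mul_exp_pi_div_four_mul_I (r : ℝ) :
    (r : ℂ) * exp (π / 4 * I) = ((r * √2 : ℝ) : ℂ) * (1 + I) / 2 := by
  rw [← cos_add_sin_I, ← ofReal_ofNat, ← ofReal_div, ← ofReal_cos, ← ofReal_sin,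
    Real.cos_pi_div_four, Real.sin_pi_div_four]
  push_cast
  ring

theorem re_Li_two_combination :
    2 * (Li 2 (I / 2)).re + 2 * (Li 2 ((1 + I) / 4)).re - (Li 2 ((1 + I) / 8)).re =
      -(log (1 - I / 2) ^ 2).re - (log (1 - (1 + I) / 4) ^ 2).re
        + (log (1 - (1 + I) / 8) ^ 2).re / 2 := by
  set v : ℂ := (1 - 2 * I) / 5
  have h₁ := Li_two_add_Li_two_div_sub_one (z := I / 2)
    (norm_lt_one_of_normSq_lt_one (by norm_num [normSq_apply])) (by norm_num)
  have h₂ := Li_two_add_Li_two_div_sub_one (z := (1 + I) / 4)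
    (norm_lt_one_of_normSq_lt_one (by norm_num [normSq_apply, div_re, div_im])) (by norm_num [div_re])
  have h₃ := Li_two_add_Li_two_div_sub_one (z := (1 + I) / 8)
    (norm_lt_one_of_normSq_lt_one (by norm_num [normSq_apply, div_re, div_im])) (by norm_num [div_re])
  have hdup := two_mul_Li_sq 2 (z := v)
    (norm_lt_one_of_normSq_lt_one (by norm_num [v, normSq_apply, div_re, div_im]))
  rw [show I / 2 / (I / 2 - 1) = v by apply Complex.ext <;> norm_num [v, div_re, div_im, normSq_apply]]
    at h₁
  rw [show (1 + I) / 4 / ((1 + I) / 4 - 1) = conj (-v) by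
    apply Complex.ext <;> norm_num [v, div_re, div_im, normSq_apply], Li_conj] at h₂
  rw [show (1 + I) / 8 / ((1 + I) / 8 - 1) = v ^ 2 by
    apply Complex.ext <;> norm_num [v, div_re, div_im, normSq_apply, pow_two]] at h₃
  have key : 2 * Li 2 (I / 2) + 2 * Li 2 ((1 + I) / 4) - Li 2 ((1 + I) / 8) =
      -log (1 - I / 2) ^ 2 - log (1 - (1 + I) / 4) ^ 2 + log (1 - (1 + I) / 8) ^ 2 / 2
        + 2 * (Li 2 (-v) - conj (Li 2 (-v))) := by
    linear_combination 2 * h₁ + 2 * h₂ - h₃ + hdup / 2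
  simpa using congrArg re key

theorem re_log_sq_combination :
    -(log (1 - I / 2) ^ 2).re - (log (1 - (1 + I) / 4) ^ 2).re
        + (log (1 - (1 + I) / 8) ^ 2).re / 2 = π ^ 2 / 32 - Real.log 2 ^ 2 / 8 := by
  rw [re_log_sq_of_re_pos (by norm_num), re_log_sq_of_re_pos (by norm_num [div_re]),
    re_log_sq_of_re_pos (by norm_num [div_re])]
  norm_num [normSq_apply, div_re, div_im, Real.arctan_neg]
  have hlog_mul : Real.log (25 / 32) = Real.log (5 / 4) + Real.log (5 / 8) := by
    rw [← Real.log_mul (by norm_num) (by norm_num)]; norm_num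
  have hlog_div : Real.log (5 / 4) - Real.log (5 / 8) = Real.log 2 := by
    rw [← Real.log_div (by norm_num) (by norm_num)]; norm_num
  have harctan₁ : Real.arctan (1 / 2) + Real.arctan (1 / 3) = π / 4 := by
    rw [Real.arctan_add (by norm_num), ← Real.arctan_one]; norm_num
  have harctan₂ : Real.arctan (1 / 3) + Real.arctan (1 / 7) = Real.arctan (1 / 2) := by
    rw [Real.arctan_add (by norm_num)]; norm_num
  linear_combination
    (Real.log (25 / 32) + Real.log (5 / 4) + Real.log (5 / 8)) / 8 * hlog_mul
    - (Real.log (5 / 4) - Real.log (5 / 8) + Real.log 2) / 8 * hlog_div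
    + (Real.arctan (1 / 2) + Real.arctan (1 / 3) + π / 4) / 2 * harctan₁
    - (Real.arctan (1 / 2) - Real.arctan (1 / 3) + Real.arctan (1 / 7)) / 2 * harctan₂

theorem stmt6 : Real.pi ^ 2 / 32 - (Real.log 2) ^ 2 / 8 = 2 * (Li 2 (((1/2 : ℝ) : ℂ) * Complex.exp ((Real.pi / 2) * Complex.I))).re + 2 * (Li 2 (((1 / (2 * Real.sqrt 2) : ℝ) : ℂ) * Complex.exp ((Real.pi / 4) * Complex.I))).re - (Li 2 (((1 / (4 * Real.sqrt 2) : ℝ) : ℂ) * Complex.exp ((Real.pi / 4) * Complex.I))).re := by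
  rw [exp_pi_div_two_mul_I, ofReal_mul_exp_pi_div_four_mul_I, ofReal_mul_exp_pi_div_four_mul_I,
    show 1 / (2 * √2) * √2 = 1 / 2 by field_simp, show 1 / (4 * √2) * √2 = 1 / 4 by field_simp]
  push_cast
  rw [show (1 / 2 * I : ℂ) = I / 2 by ring, show (1 / 2 * (1 + I) / 2 : ℂ) = (1 + I) / 4 by ring,
    show (1 / 4 * (1 + I) / 2 : ℂ) = (1 + I) / 8 by ring, re_Li_two_combination,
    re_log_sq_combination]
end

section
/- Li₃(1/2) = 7ζ(3)/8 − π²·log 2/12 + (log 2)³/6, where Li₃(x) = ∑_{k≥1} x^k/k³ and ζ(3) = ∑_{k≥1} 1/k³. -/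
noncomputable def zeta3 : ℝ := ∑' k : ℕ, 1 / ((k : ℝ) + 1) ^ 3

/-!
Termwise differentiation gives `(LiR (s + 1))' x = LiR s x / x` on `|x| < 1`, and
`LiR 1 x = -log (1 - x)`. Hence Euler's reflection
`Li₂ x + Li₂ (1 - x) + log x log (1 - x)`, Landen's identity
`Li₂ (x / (x - 1)) + Li₂ x + log² (1 - x) / 2` and, using these two, Landen's identity for `Li₃`
all have zero derivative on an interval. The series converge uniformly on `[-1, 1]`, so they are
continuous up to the endpoints, and each constant is read off at `x = 0` from `Li₂ 1 = π² / 6` and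
`Li₃ 1 = ζ(3)`. At `x = 1 / 2` the `Li₃` identity involves `Li₃ (1 / 2)` twice and `Li₃ (-1)`,
which is `-3ζ(3) / 4` by the duplication formula `Li_s x + Li_s (-x) = 2 ^ (1 - s) Li_s (x²)`.
-/

open Real Set

section Series

variable {s : ℕ} {x : ℝ}

lemma summable_one_div_nat_succ_pow (hs : 1 < s) :
    Summable fun k : ℕ => 1 / ((k : ℝ) + 1) ^ s := by
  simpa using (summable_nat_add_iff 1).2 (Real.summable_one_div_nat_pow.2 hs)

lemma norm_LiR_term_le (hs : 2 ≤ s) (hx : |x| ≤ 1) (k : ℕ) :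
    ‖x ^ (k + 1) / ((k : ℝ) + 1) ^ s‖ ≤ 1 / ((k : ℝ) + 1) ^ 2 := by
  rw [norm_div, norm_pow, norm_pow, Real.norm_eq_abs, Real.norm_of_nonneg (by positivity)]
  gcongr
  · exact pow_le_one₀ (abs_nonneg x) hx
  · exact le_add_of_nonneg_left k.cast_nonneg

lemma summable_LiR (hs : 2 ≤ s) (hx : |x| ≤ 1) :
    Summable fun k : ℕ => x ^ (k + 1) / ((k : ℝ) + 1) ^ s :=
  .of_norm_bounded (summable_one_div_nat_succ_pow one_lt_two) (norm_LiR_term_le hs hx)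

lemma continuousOn_LiR (hs : 2 ≤ s) : ContinuousOn (LiR s) (Icc (-1) 1) :=
  continuousOn_tsum (fun _ => by fun_prop) (summable_one_div_nat_succ_pow one_lt_two)
    fun k _ hx => norm_LiR_term_le hs (abs_le.2 hx) k

@[simp]
lemma LiR_zero : LiR s 0 = 0 := by
  simp [LiR]

lemma LiR_one_eq_neg_log (hx : |x| < 1) : LiR 1 x = -log (1 - x) := by
  simpa [LiR] using (Real.hasSum_pow_div_log_of_abs_lt_one hx).tsum_eq

lemma LiR_two_one : LiR 2 1 = π ^ 2 / 6 := by
  have h := (hasSum_nat_add_iff' 1).2 hasSum_zeta_two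
  simpa [LiR] using h.tsum_eq

lemma LiR_three_one : LiR 3 1 = zeta3 := by
  simp [LiR, zeta3]

lemma hasDerivAt_LiR_succ_tsum (s : ℕ) (hx : |x| < 1) :
    HasDerivAt (LiR (s + 1)) (∑' k : ℕ, x ^ k / ((k : ℝ) + 1) ^ s) x := by
  obtain ⟨r, hxr, hr1⟩ := exists_between hx
  have hr0 : 0 < r := (abs_nonneg x).trans_lt hxr
  have hterm (k : ℕ) (y : ℝ) : HasDerivAt (fun z : ℝ => z ^ (k + 1) / ((k : ℝ) + 1) ^ (s + 1))
      (y ^ k / ((k : ℝ) + 1) ^ s) y := by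
    refine ((hasDerivAt_pow (k + 1) y).div_const _).congr_deriv ?_
    push_cast
    field_simp
    ring
  have hbound (k : ℕ) (y : ℝ) (hy : y ∈ Metric.ball (0 : ℝ) r) :
      ‖y ^ k / ((k : ℝ) + 1) ^ s‖ ≤ r ^ k := by
    rw [mem_ball_zero_iff, Real.norm_eq_abs] at hy
    rw [norm_div, norm_pow, Real.norm_eq_abs, Real.norm_of_nonneg (by positivity)]
    calc |y| ^ k / ((k : ℝ) + 1) ^ s ≤ |y| ^ k :=
          div_le_self (by positivity) (one_le_pow₀ (le_add_of_nonneg_left k.cast_nonneg))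
      _ ≤ r ^ k := pow_le_pow_left₀ (abs_nonneg y) hy.le k
  exact hasDerivAt_tsum_of_isPreconnected (summable_geometric_of_lt_one hr0.le hr1)
    Metric.isOpen_ball (convex_ball (0 : ℝ) r).isPreconnected (fun k y _ => hterm k y) hbound
    (Metric.mem_ball_self hr0) (by simp) (by simpa using hxr)

lemma hasDerivAt_LiR_succ (s : ℕ) (hx : |x| < 1) (hx0 : x ≠ 0) :
    HasDerivAt (LiR (s + 1)) (LiR s x / x) x := by
  convert hasDerivAt_LiR_succ_tsum s hx using 1
  rw [LiR, div_eq_iff hx0, ← tsum_mul_right]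
  exact tsum_congr fun k => by ring

lemma hasDerivAt_LiR_two (hx : |x| < 1) (hx0 : x ≠ 0) :
    HasDerivAt (LiR 2) (-log (1 - x) / x) x := by
  simpa only [LiR_one_eq_neg_log hx] using hasDerivAt_LiR_succ 1 hx hx0

lemma LiR_add_LiR_neg (hs : 2 ≤ s) (hx : |x| ≤ 1) :
    LiR s x + LiR s (-x) = 2 * LiR s (x ^ 2) / 2 ^ s := by
  have hsq : |x ^ 2| ≤ 1 := by simpa using pow_le_one₀ (abs_nonneg x) hx (n := 2)
  have hsum := (summable_LiR hs hx).hasSum.add (summable_LiR hs (x := -x) (by rwa [abs_neg])).hasSum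
  have hsplit : HasSum (fun k : ℕ => x ^ (k + 1) / ((k : ℝ) + 1) ^ s +
      (-x) ^ (k + 1) / ((k : ℝ) + 1) ^ s) (0 + 2 / 2 ^ s * LiR s (x ^ 2)) := by
    refine HasSum.even_add_odd ?_ ?_
    · refine hasSum_zero.congr_fun fun m => ?_
      rw [Odd.neg_pow ⟨m, rfl⟩]
      ring
    · refine ((summable_LiR hs hsq).hasSum.mul_left (2 / 2 ^ s)).congr_fun fun m => ?_
      rw [Even.neg_pow ⟨m + 1, by ring⟩]
      push_cast
      rw [show (2 * (m : ℝ) + 1 + 1) = 2 * (m + 1) by ring, mul_pow]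
      ring
  exact (hsum.unique hsplit).trans (by ring)

lemma LiR_three_neg_one : LiR 3 (-1) = -(3 / 4) * zeta3 := by
  have h := LiR_add_LiR_neg (s := 3) (x := 1) (by norm_num) (by norm_num)
  rw [one_pow, LiR_three_one] at h
  linarith

end Series

lemma constant_of_hasDerivAt_zero {f : ℝ → ℝ} {a b : ℝ} (hf : ContinuousOn f (Icc a b))
    (hf' : ∀ x ∈ Ioo a b, HasDerivAt f 0 x) : ∀ x ∈ Icc a b, f x = f a := by
  intro x hx
  rcases hx.1.eq_or_lt with rfl | hax
  · rfl
  obtain ⟨c, -, hc⟩ := exists_hasDerivAt_eq_slope f (fun _ => 0) hax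
    (hf.mono (Icc_subset_Icc_right hx.2)) fun y hy => hf' y ⟨hy.1, hy.2.trans_le hx.2⟩
  rw [eq_comm, div_eq_zero_iff, sub_eq_zero] at hc
  exact hc.resolve_right (sub_ne_zero.2 hax.ne')

lemma continuousAt_log_mul_log_one_sub_zero :
    ContinuousAt (fun x => log x * log (1 - x)) 0 := by
  have hg : DifferentiableAt ℝ (fun x : ℝ => log (1 - x)) 0 := by fun_prop (disch := norm_num)
  -- `log (1 - x)` vanishes at `0`, so it is `x` times its (continuous) difference quotient.
  have h : (fun x : ℝ => log x * log (1 - x)) =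
      fun x => x * log x * dslope (fun x : ℝ => log (1 - x)) 0 x := by
    funext x
    have := sub_smul_dslope (fun x : ℝ => log (1 - x)) 0 x
    simp only [sub_zero, smul_eq_mul, log_one] at this
    rw [← this]
    ring
  rw [h]
  exact Real.continuous_mul_log.continuousAt.mul (continuousAt_dslope_same.2 hg)

lemma continuousOn_log_mul_log_one_sub :
    ContinuousOn (fun x => log x * log (1 - x)) (Icc 0 1) := by
  intro x _
  apply ContinuousAt.continuousWithinAt
  rcases eq_or_ne x 0 with rfl | hx0
  · exact continuousAt_log_mul_log_one_sub_zero
  rcases eq_or_ne x 1 with rfl | hx1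
  · have h := ContinuousAt.comp (x := 1) (f := fun y : ℝ => 1 - y)
      (by simpa using continuousAt_log_mul_log_one_sub_zero) (continuous_sub_left 1).continuousAt
    convert h using 2 with y
    simp only [Function.comp_apply, sub_sub_cancel]
    ring
  · exact (continuousAt_log hx0).mul
      ((continuousAt_log (sub_ne_zero.2 hx1.symm)).comp (continuous_sub_left 1).continuousAt)

section Identities

variable {x : ℝ}

lemma hasDerivAt_LiR_two_reflection (hx : x ∈ Ioo 0 1) :
    HasDerivAt (fun y => LiR 2 y + LiR 2 (1 - y) + log y * log (1 - y)) 0 x := by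
  obtain ⟨hx0, hx1⟩ := hx
  have h1x : 1 - x ≠ 0 := by linarith
  have hsub : HasDerivAt (fun y : ℝ => 1 - y) (-1) x := (hasDerivAt_id' x).const_sub 1
  have hA := hasDerivAt_LiR_two (abs_lt.2 ⟨by linarith, hx1⟩) hx0.ne'
  have hB := (hasDerivAt_LiR_two (abs_lt.2 ⟨by linarith, by linarith⟩) h1x).comp x hsub
  have hC := (hasDerivAt_log hx0.ne').mul (hsub.log h1x)
  refine ((hA.add hB).add hC).congr_deriv ?_
  rw [sub_sub_cancel]
  field_simp
  ring

lemma LiR_two_reflection (hx : x ∈ Icc 0 1) :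
    LiR 2 x + LiR 2 (1 - x) + log x * log (1 - x) = π ^ 2 / 6 := by
  have hcont : ContinuousOn (fun y => LiR 2 y + LiR 2 (1 - y) + log y * log (1 - y)) (Icc 0 1) := by
    refine ((continuousOn_LiR le_rfl).mono ?_).add ?_ |>.add continuousOn_log_mul_log_one_sub
    · exact Icc_subset_Icc (by norm_num) le_rfl
    · exact (continuousOn_LiR le_rfl).comp (continuousOn_const.sub continuousOn_id)
        fun y hy => ⟨by linarith [hy.2], by linarith [hy.1]⟩
  have := constant_of_hasDerivAt_zero hcont (fun y hy => hasDerivAt_LiR_two_reflection hy) x hx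
  simpa [LiR_two_one] using this

lemma div_sub_one_mem_Ioo (hx : x ∈ Ioo 0 (1 / 2)) : x / (x - 1) ∈ Ioo (-1) 0 := by
  have h : x - 1 < 0 := by linarith [hx.2]
  exact ⟨by rw [lt_div_iff_of_neg h]; linarith [hx.2], div_neg_of_pos_of_neg hx.1 h⟩

lemma mapsTo_div_sub_one : MapsTo (fun x : ℝ => x / (x - 1)) (Icc 0 (1 / 2)) (Icc (-1) 1) := by
  intro x hx
  have h : x - 1 < 0 := by linarith [hx.2]
  exact ⟨by rw [le_div_iff_of_neg h]; linarith [hx.2],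
    (div_nonpos_of_nonneg_of_nonpos hx.1 h.le).trans zero_le_one⟩

lemma continuousOn_div_sub_one : ContinuousOn (fun x : ℝ => x / (x - 1)) (Icc 0 (1 / 2)) :=
  continuousOn_id.div (continuousOn_id.sub continuousOn_const) fun x hx => by
    linarith [hx.2]

lemma hasDerivAt_div_sub_one (hx : x ≠ 1) :
    HasDerivAt (fun y : ℝ => y / (y - 1)) (-1 / (x - 1) ^ 2) x := by
  refine ((hasDerivAt_id x).div ((hasDerivAt_id x).sub_const 1) (sub_ne_zero.2 hx)).congr_deriv ?_
  simp only [id_eq]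
  ring

lemma one_sub_div_sub_one (hx : x ≠ 1) : 1 - x / (x - 1) = (1 - x)⁻¹ := by
  have : x - 1 ≠ 0 := sub_ne_zero.2 hx
  have : 1 - x ≠ 0 := sub_ne_zero.2 hx.symm
  field_simp
  ring

lemma hasDerivAt_LiR_two_landen (hx : x ∈ Ioo 0 (1 / 2)) :
    HasDerivAt (fun y => LiR 2 (y / (y - 1)) + LiR 2 y + log (1 - y) ^ 2 / 2) 0 x := by
  have hu := div_sub_one_mem_Ioo hx
  obtain ⟨hx0, hx2⟩ := hx
  have hx1 : x ≠ 1 := by linarith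
  have h1x : 1 - x ≠ 0 := by linarith
  have hsub : HasDerivAt (fun y : ℝ => 1 - y) (-1) x := (hasDerivAt_id' x).const_sub 1
  have hA := (hasDerivAt_LiR_two (abs_lt.2 ⟨hu.1, by linarith [hu.2]⟩) hu.2.ne).comp x
    (hasDerivAt_div_sub_one hx1)
  have hB := hasDerivAt_LiR_two (abs_lt.2 ⟨by linarith, by linarith⟩) hx0.ne'
  have hC := ((hsub.log h1x).pow 2).div_const 2
  refine ((hA.add hB).add hC).congr_deriv ?_
  rw [one_sub_div_sub_one hx1, log_inv]
  field_simp
  ring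

lemma LiR_two_landen (hx : x ∈ Icc 0 (1 / 2)) :
    LiR 2 (x / (x - 1)) + LiR 2 x + log (1 - x) ^ 2 / 2 = 0 := by
  have hcont : ContinuousOn (fun y => LiR 2 (y / (y - 1)) + LiR 2 y + log (1 - y) ^ 2 / 2)
      (Icc 0 (1 / 2)) := by
    refine (((continuousOn_LiR le_rfl).comp continuousOn_div_sub_one mapsTo_div_sub_one).add
      ((continuousOn_LiR le_rfl).mono ?_)).add ?_
    · exact Icc_subset_Icc (by norm_num) (by norm_num)
    · exact ((continuousOn_const.sub continuousOn_id).log fun y hy => by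
        simp only [Pi.sub_apply, id_eq]; linarith [hy.2]).pow 2 |>.div_const 2
  have := constant_of_hasDerivAt_zero hcont (fun y hy => hasDerivAt_LiR_two_landen hy) x hx
  simpa using this

lemma hasDerivAt_LiR_three_landen (hx : x ∈ Ioo 0 (1 / 2)) :
    HasDerivAt (fun y => LiR 3 y + LiR 3 (1 - y) + LiR 3 (y / (y - 1)) - log (1 - y) ^ 3 / 6
      - π ^ 2 / 6 * log (1 - y) + log y * log (1 - y) ^ 2 / 2) 0 x := by
  have hu := div_sub_one_mem_Ioo hx
  have hrefl := LiR_two_reflection ⟨hx.1.le, by linarith [hx.2]⟩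
  have hlanden := LiR_two_landen (Ioo_subset_Icc_self hx)
  obtain ⟨hx0, hx2⟩ := hx
  have hx1 : x ≠ 1 := by linarith
  have h1x : 1 - x ≠ 0 := by linarith
  have hsub : HasDerivAt (fun y : ℝ => 1 - y) (-1) x := (hasDerivAt_id' x).const_sub 1
  have hA := hasDerivAt_LiR_succ 2 (abs_lt.2 ⟨by linarith, by linarith⟩) hx0.ne'
  have hB := (hasDerivAt_LiR_succ 2 (abs_lt.2 ⟨by linarith, by linarith⟩) h1x).comp x hsub
  have hC := (hasDerivAt_LiR_succ 2 (abs_lt.2 ⟨hu.1, by linarith [hu.2]⟩) hu.2.ne).comp x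
    (hasDerivAt_div_sub_one hx1)
  have hD := ((hsub.log h1x).pow 3).div_const 6
  have hE := (hsub.log h1x).const_mul (π ^ 2 / 6)
  have hF := ((hasDerivAt_log hx0.ne').mul ((hsub.log h1x).pow 2)).div_const 2
  refine (((((hA.add hB).add hC).sub hD).sub hE).add hF).congr_deriv ?_
  simp only [Pi.pow_apply]
  rw [show LiR 2 (1 - x) = π ^ 2 / 6 - LiR 2 x - log x * log (1 - x) by linarith,
    show LiR 2 (x / (x - 1)) = -LiR 2 x - log (1 - x) ^ 2 / 2 by linarith]
  field_simp
  ring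

lemma LiR_three_landen (hx : x ∈ Icc 0 (1 / 2)) :
    LiR 3 x + LiR 3 (1 - x) + LiR 3 (x / (x - 1)) - log (1 - x) ^ 3 / 6
      - π ^ 2 / 6 * log (1 - x) + log x * log (1 - x) ^ 2 / 2 = zeta3 := by
  have hsub : Icc (0 : ℝ) (1 / 2) ⊆ Icc 0 1 := Icc_subset_Icc le_rfl (by norm_num)
  have hlog : ContinuousOn (fun y : ℝ => log (1 - y)) (Icc 0 (1 / 2)) :=
    (continuousOn_const.sub continuousOn_id).log fun y hy => by
      simp only [Pi.sub_apply, id_eq]; linarith [hy.2]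
  have hcont : ContinuousOn (fun y => LiR 3 y + LiR 3 (1 - y) + LiR 3 (y / (y - 1))
      - log (1 - y) ^ 3 / 6 - π ^ 2 / 6 * log (1 - y) + log y * log (1 - y) ^ 2 / 2)
      (Icc 0 (1 / 2)) := by
    have hprod := (continuousOn_log_mul_log_one_sub.mono hsub).mul hlog
    refine (((((continuousOn_LiR (by norm_num)).mono ?_).add ?_).add
      ((continuousOn_LiR (by norm_num)).comp continuousOn_div_sub_one mapsTo_div_sub_one)).sub
      ((hlog.pow 3).div_const 6)).sub (hlog.const_mul _) |>.add ?_
    · exact hsub.trans (Icc_subset_Icc (by norm_num) le_rfl)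
    · exact (continuousOn_LiR (by norm_num)).comp (continuousOn_const.sub continuousOn_id)
        fun y hy => ⟨by linarith [hy.2], by linarith [hy.1]⟩
    · exact (hprod.div_const 2).congr fun y _ => by simp only [Pi.mul_apply]; ring
  have := constant_of_hasDerivAt_zero hcont (fun y hy => hasDerivAt_LiR_three_landen hy) x hx
  simpa [LiR_three_one] using this

end Identities

theorem stmt13 : LiR 3 (1/2) = 7 * zeta3 / 8 - Real.pi ^ 2 * Real.log 2 / 12 + (Real.log 2) ^ 3 / 6 := by
  have h := LiR_three_landen (x := 1 / 2) (by norm_num)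
  rw [show (1 : ℝ) - 1 / 2 = 1 / 2 by norm_num, show (1 / 2 : ℝ) / (1 / 2 - 1) = -1 by norm_num,
    show log (1 / 2) = -log 2 by rw [one_div, log_inv]] at h
  rw [LiR_three_neg_one] at h
  linear_combination h / 2
end
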